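/- arXiv:1309.7189 — 6 statements merged into one kernel-verified Lean document; each statement's English description precedes it below -/
import Mathlib

section
/- Assume c is Lipschitz in x uniformly in a, c(x,A) is convex for every x, B̄(0,c₀) ⊆ c(x,A) for all x for some c₀ > 0, and c(·,a) is ℤ^N-periodic in x. Let T > 0, m ∈ L¹((0,T)×T^N) and w ∈ L¹((0,T)×T^N; ℝ^N), and set Σ := sup { ∫₀^T∫_{T^N} (−b(t,x)·w(t,x) − H(x,b(t,x)) m(t,x)) dx dt : b : [0,T]×T^N → ℝ^N continuous }. If m ≥ 0 almost everywhere and w(t,x) ∈ m(t,x)·c(x,A) almost everywhere, then Σ = 0; otherwise Σ = +∞. -/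
/-!
By positive homogeneity of `H(x, ·)`, the field `b = φ p` with `φ ≥ 0` has value
`∫ φ (−p·w − H(x,p) m)`. If `m ≥ 0` and `w = m c(x,a)`, then `−b·w − H(x,b) m ≤ 0` pointwise, so
`Σ = 0`, attained at `b = 0`. Conversely, if `Σ < ∞`, then scaling `φ` shows that
`∫ φ (−p·w − H(x,p) m) ≤ 0` for every continuous periodic `φ ≥ 0`. Continuous functions supported
in the open unit cube can be periodized, and they approximate indicators of compact sets, so
`p·w + H(x,p) m ≥ 0` a.e. for each `p`. Since this inequality is continuous in `p`, it holds a.e.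
for all `p` at once. Pointwise, the ball `B(0,c₀) ⊆ c(x,A)` makes `H(x,p) + H(x,−p) > 0`, which
forces `m ≥ 0`. Separating `w` from the compact convex set `m c(x,A)` then gives `w ∈ m c(x,A)`.
-/

open MeasureTheory RealInnerProductSpace Metric Set Function Filter Topology
open scoped Pointwise

noncomputable def hamiltonian {X A E : Type*} [NormedAddCommGroup E] [InnerProductSpace ℝ E]
    (c : X → A → E) (x : X) (p : E) : ℝ :=
  ⨆ a, -⟪c x a, p⟫

section Hamiltonian

variable {X A E : Type*} [NormedAddCommGroup E] [InnerProductSpace ℝ E]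
  {c : X → A → E} {x : X} {p : E}

theorem neg_inner_le_hamiltonian [TopologicalSpace A] [CompactSpace A] (hc : Continuous (c x))
    (a : A) : -⟪c x a, p⟫ ≤ hamiltonian c x p :=
  le_ciSup (isCompact_range (f := fun a => -⟪c x a, p⟫) (by fun_prop)).bddAbove a

theorem hamiltonian_smul {s : ℝ} (hs : 0 ≤ s) :
    hamiltonian c x (s • p) = s * hamiltonian c x p := by
  simp only [hamiltonian, Real.mul_iSup_of_nonneg hs, real_inner_smul_right, mul_neg]

theorem hamiltonian_zero : hamiltonian c x 0 = 0 := by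
  simpa using hamiltonian_smul (c := c) (x := x) (p := 0) le_rfl

theorem hamiltonian_pos [TopologicalSpace A] [CompactSpace A] (hc : Continuous (c x)) {r : ℝ}
    (hr : 0 < r) (hball : closedBall 0 r ⊆ range (c x)) (hp : p ≠ 0) : 0 < hamiltonian c x p := by
  have hpn : 0 < ‖p‖ := norm_pos_iff.2 hp
  obtain ⟨a, ha⟩ : (-(r / ‖p‖)) • p ∈ range (c x) := hball <| by
    rw [mem_closedBall_zero_iff, norm_smul, norm_neg, Real.norm_of_nonneg (by positivity),
      div_mul_cancel₀ _ hpn.ne']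
  calc 0 < r * ‖p‖ := by positivity
    _ = -⟪c x a, p⟫ := by
      rw [ha, real_inner_smul_left, real_inner_self_eq_norm_sq]; field_simp
    _ ≤ hamiltonian c x p := neg_inner_le_hamiltonian hc a

theorem continuous_hamiltonian [TopologicalSpace X] [TopologicalSpace A] [CompactSpace A]
    (hc : Continuous ↿c) : Continuous fun q : X × E => hamiltonian c q.1 q.2 := by
  have := (isCompact_univ (X := A)).continuous_sSup
    (f := fun (q : X × E) a => -⟪c q.1 a, q.2⟫) (by fun_prop)
  simpa only [image_univ, sSup_range, hamiltonian] using this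

theorem neg_inner_sub_hamiltonian_mul_nonpos [TopologicalSpace A] [CompactSpace A]
    (hc : Continuous (c x)) {m : ℝ} (hm : 0 ≤ m) (b : E) (a : A) :
    -⟪b, m • c x a⟫ - hamiltonian c x b * m ≤ 0 := by
  have := neg_inner_le_hamiltonian (p := b) hc a
  rw [real_inner_smul_right, real_inner_comm]
  nlinarith

theorem nonneg_of_forall_inner_add_hamiltonian_mul_nonneg [Nontrivial E] [TopologicalSpace A]
    [CompactSpace A] (hc : Continuous (c x)) {r : ℝ} (hr : 0 < r)
    (hball : closedBall 0 r ⊆ range (c x)) {m : ℝ} {v : E}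
    (h : ∀ p, 0 ≤ ⟪p, v⟫ + hamiltonian c x p * m) : 0 ≤ m := by
  obtain ⟨p, hp⟩ := exists_ne (0 : E)
  have hsum : 0 < hamiltonian c x p + hamiltonian c x (-p) :=
    add_pos (hamiltonian_pos hc hr hball hp) (hamiltonian_pos hc hr hball (neg_ne_zero.2 hp))
  have := add_nonneg (h p) (h (-p))
  rw [inner_neg_left] at this
  nlinarith

theorem exists_eq_smul_of_forall_inner_add_hamiltonian_mul_nonneg [CompleteSpace E]
    [TopologicalSpace A] [CompactSpace A] [Nonempty A] (hc : Continuous (c x))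
    (hconv : Convex ℝ (range (c x))) {m : ℝ} (hm : 0 ≤ m) {v : E}
    (h : ∀ p, 0 ≤ ⟪p, v⟫ + hamiltonian c x p * m) : ∃ a, v = m • c x a := by
  by_contra hv
  obtain ⟨f, u, hfv, hfK⟩ := geometric_hahn_banach_point_closed (hconv.smul m)
    (smul_set_range m (c x) ▸ (isCompact_range (hc.const_smul m)).isClosed)
    (by rintro ⟨_, ⟨a, rfl⟩, hva⟩; exact hv ⟨a, hva.symm⟩)
  set z := (InnerProductSpace.toDual ℝ E).symm f
  have hHz : hamiltonian c x z * m ≤ -u := by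
    rw [hamiltonian, Real.iSup_mul_of_nonneg hm]
    refine ciSup_le fun a => ?_
    have := hfK _ (smul_mem_smul_set (mem_range_self a))
    rw [← InnerProductSpace.toDual_symm_apply, real_inner_smul_right, real_inner_comm] at this
    linarith
  have := h z
  rw [InnerProductSpace.toDual_symm_apply] at this
  linarith

end Hamiltonian

section Periodize

variable {X M ι : Type*} [AddCommMonoid M]

noncomputable def periodize (φ : X × EuclideanSpace ℝ ι → M) (q : X × EuclideanSpace ℝ ι) : M :=
  ∑ᶠ k : ι → ℤ, φ (q.1, q.2 + WithLp.toLp 2 fun i => (k i : ℝ))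

theorem periodize_add_single [DecidableEq ι] (φ : X × EuclideanSpace ℝ ι → M) (t : X)
    (x : EuclideanSpace ℝ ι) (i : ι) :
    periodize φ (t, x + EuclideanSpace.single i 1) = periodize φ (t, x) := by
  rw [periodize, periodize]
  conv_rhs => rw [← finsum_comp_equiv (Equiv.addRight (Pi.single i 1))]
  refine finsum_congr fun k => congrArg (fun y => φ (t, y)) ?_
  ext j
  by_cases hj : j = i
  · subst hj; simp [add_assoc, add_comm]
  · simp [hj]

theorem periodize_eq_self {φ : X × EuclideanSpace ℝ ι → M}
    (hφ : support φ ⊆ {q | ∀ i, q.2 i ∈ Ioo 0 1}) {q : X × EuclideanSpace ℝ ι}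
    (hq : ∀ i, q.2 i ∈ Ico 0 1) : periodize φ q = φ q := by
  rw [periodize, finsum_eq_single _ 0]
  · simp [← Pi.zero_def]
  intro k hk
  obtain ⟨i, hi⟩ := Function.ne_iff.1 hk
  refine notMem_support.1 fun h => ?_
  have hki := hφ h i
  have hxi := hq i
  simp only [PiLp.add_apply, mem_Ioo, mem_Ico] at hki hxi
  rcases lt_or_gt_of_ne hi with hneg | hpos
  · have : (k i : ℝ) ≤ -1 := by exact_mod_cast Int.le_sub_one_of_lt hneg
    linarith
  · have : (1 : ℝ) ≤ k i := by exact_mod_cast hpos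
    linarith

theorem continuous_periodize [Fintype ι] [TopologicalSpace X] [TopologicalSpace M]
    [ContinuousAdd M] {φ : X × EuclideanSpace ℝ ι → M} (hφc : Continuous φ)
    (hφ : support φ ⊆ {q | ∀ i, q.2 i ∈ Ioo 0 1}) : Continuous (periodize φ) := by
  refine continuous_finsum (fun k => hφc.comp (by fun_prop)) fun q => ?_
  refine ⟨Prod.snd ⁻¹' ball q.2 1, continuous_snd.continuousAt.preimage_mem_nhds
    (ball_mem_nhds _ one_pos), ?_⟩
  refine (Set.Finite.pi (t := fun i => Icc (⌊-q.2 i⌋ - 1) (⌈1 - q.2 i⌉ + 1))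
    fun i => finite_Icc _ _).subset ?_
  rintro k ⟨q', hk, hq'⟩
  simp only [Set.mem_pi, mem_univ, mem_Icc, true_implies]
  intro i
  have hki := hφ hk i
  have hdist : |q'.2 i - q.2 i| < 1 := by
    have := PiLp.norm_apply_le (q'.2 - q.2) i
    rw [mem_preimage, mem_ball, dist_eq_norm] at hq'
    simp only [PiLp.sub_apply, Real.norm_eq_abs] at this
    linarith
  simp only [PiLp.add_apply, mem_Ioo] at hki
  rw [abs_lt] at hdist
  constructor
  · have : ((⌊-q.2 i⌋ - 1 : ℤ) : ℝ) < k i := by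
      push_cast; linarith [Int.floor_le (-q.2 i)]
    exact_mod_cast this.le
  · have : (k i : ℝ) < ((⌈1 - q.2 i⌉ + 1 : ℤ) : ℝ) := by
      push_cast; linarith [Int.le_ceil (1 - q.2 i)]
    exact_mod_cast this.le

end Periodize

section TestFunction

variable {X : Type*} [MetricSpace X] [MeasurableSpace X] [OpensMeasurableSpace X]
  {μ : Measure X} {g : X → ℝ} {U : Set X}

theorem exists_isCompact_subset_setIntegral_pos [μ.InnerRegular] (hg : Integrable g μ)
    (hU : IsOpen U) (hUμ : ∀ᵐ x ∂μ, x ∈ U) (hpos : ¬ ∀ᵐ x ∂μ, g x ≤ 0) :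
    ∃ K ⊆ U, IsCompact K ∧ 0 < ∫ x in K, g x ∂μ := by
  set g' := hg.aestronglyMeasurable.mk g
  have hgg' : g =ᵐ[μ] g' := hg.aestronglyMeasurable.ae_eq_mk
  have hE : μ ({x | 0 < g' x} ∩ U) ≠ 0 := fun h0 => hpos <| by
    filter_upwards [hgg', hUμ, measure_eq_zero_iff_ae_notMem.1 h0] with x hx hxU hx0
    exact hx ▸ not_lt.1 fun hlt => hx0 ⟨hlt, hxU⟩
  obtain ⟨K, hKE, hK, hKpos⟩ := MeasurableSet.exists_lt_isCompact
    ((hg.aestronglyMeasurable.stronglyMeasurable_mk.measurable measurableSet_Ioi).inter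
      hU.measurableSet) (pos_iff_ne_zero.2 hE)
  refine ⟨K, hKE.trans inter_subset_right, hK, ?_⟩
  rw [integral_congr_ae (ae_restrict_of_ae hgg'), setIntegral_pos_iff_support_of_nonneg_ae
    (ae_restrict_of_forall_mem hK.measurableSet fun x hx => (hKE hx).1.le)
    (hg.congr hgg').integrableOn]
  exact hKpos.trans_le (measure_mono fun x hx => ⟨(hKE hx).1.ne', hx⟩)

theorem exists_continuous_integral_mul_pos [μ.InnerRegular] (hg : Integrable g μ)
    (hU : IsOpen U) (hUμ : ∀ᵐ x ∂μ, x ∈ U) (hpos : ¬ ∀ᵐ x ∂μ, g x ≤ 0) :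
    ∃ φ : X → ℝ, Continuous φ ∧ (∀ x, 0 ≤ φ x) ∧ support φ ⊆ U ∧ 0 < ∫ x, φ x * g x ∂μ := by
  obtain ⟨K, hKU, hK, hKpos⟩ := exists_isCompact_subset_setIntegral_pos hg hU hUμ hpos
  obtain ⟨δ, hδ, hδU⟩ := hK.exists_thickening_subset_open hU hKU
  have hδn (n : ℕ) : 0 < δ / (n + 1) := by positivity
  set φ : ℕ → X → ℝ := fun n x => thickenedIndicator (hδn n) K x
  have hlim : Tendsto (fun n => ∫ x, φ n x * g x ∂μ) atTop (𝓝 (∫ x in K, g x ∂μ)) := by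
    rw [← integral_indicator hK.measurableSet]
    refine tendsto_integral_of_dominated_convergence (fun x => ‖g x‖)
      (fun n => ((thickenedIndicator (hδn n) K).continuous.measurable.coe_nnreal_real
        |>.aestronglyMeasurable.mul hg.aestronglyMeasurable)) hg.norm
      (fun n => ae_of_all _ fun x => ?_) (ae_of_all _ fun x => ?_)
    · rw [norm_mul]
      refine mul_le_of_le_one_left (norm_nonneg _) ?_
      rw [Real.norm_of_nonneg (NNReal.coe_nonneg _)]
      exact_mod_cast thickenedIndicator_le_one (hδn n) K x
    · have h := tendsto_pi_nhds.1 (thickenedIndicator_tendsto_indicator_closure hδn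
        (by simpa [div_eq_mul_inv] using tendsto_one_div_add_atTop_nhds_zero_nat.const_mul δ) K) x
      rw [hK.isClosed.closure_eq] at h
      have hKx : NNReal.toReal (K.indicator (fun _ => 1) x) * g x = K.indicator g x := by
        by_cases hx : x ∈ K <;> simp [hx]
      exact hKx ▸ ((NNReal.continuous_coe.tendsto _).comp h).mul_const (g x)
  obtain ⟨n, hn⟩ := (hlim.eventually (lt_mem_nhds hKpos)).exists
  refine ⟨φ n, NNReal.continuous_coe.comp (thickenedIndicator (hδn n) K).continuous,
    fun x => NNReal.coe_nonneg _, fun x hx => hδU ?_, hn⟩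
  refine thickening_mono (div_le_self hδ.le (le_add_of_nonneg_left n.cast_nonneg)) K ?_
  by_contra hxK
  exact hx (by simp only [φ, thickenedIndicator_zero (hδn n) K hxK, NNReal.coe_zero])

end TestFunction

theorem ae_forall_apply_ne_zero {ι : Type*} [Fintype ι] :
    ∀ᵐ x : EuclideanSpace ℝ ι, ∀ i, x i ≠ 0 := by
  classical
  refine ae_all_iff.2 fun i => ?_
  have hker : LinearMap.ker (EuclideanSpace.proj (𝕜 := ℝ) i).toLinearMap ≠ ⊤ := by
    intro h
    have := h ▸ Submodule.mem_top (x := EuclideanSpace.single i (1 : ℝ))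
    simp at this
  rw [ae_iff]
  convert Measure.addHaar_submodule volume _ hker
  ext x
  simp

theorem exists_periodic_integral_mul_pos {ι : Type*} [Fintype ι] [DecidableEq ι]
    {B : Set (ℝ × EuclideanSpace ℝ ι)} (hB : MeasurableSet B)
    (hBcube : B ⊆ {q | ∀ i, q.2 i ∈ Ico 0 1}) {g : ℝ × EuclideanSpace ℝ ι → ℝ}
    (hg : IntegrableOn g B) (hpos : ¬ ∀ᵐ q ∂volume.restrict B, g q ≤ 0) :
    ∃ Φ : ℝ × EuclideanSpace ℝ ι → ℝ, Continuous Φ ∧ (∀ q, 0 ≤ Φ q) ∧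
      (∀ t x i, Φ (t, x + EuclideanSpace.single i 1) = Φ (t, x)) ∧
      0 < ∫ q in B, Φ q * g q := by
  set U : Set (ℝ × EuclideanSpace ℝ ι) := {q | ∀ i, q.2 i ∈ Ioo 0 1}
  have hU : IsOpen U := by
    simp only [U, ofPred_forall]
    exact isOpen_iInter_of_finite fun i => isOpen_Ioo.preimage (by fun_prop)
  have hUB : ∀ᵐ q ∂volume.restrict B, q ∈ U := by
    filter_upwards [ae_restrict_mem hB, ae_restrict_of_ae
      (Measure.quasiMeasurePreserving_snd.ae ae_forall_apply_ne_zero)] with q hqB hq i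
    exact ⟨(hBcube hqB i).1.lt_of_ne' (hq i), (hBcube hqB i).2⟩
  obtain ⟨φ, hφc, hφ0, hφU, hφpos⟩ := exists_continuous_integral_mul_pos hg hU hUB hpos
  refine ⟨periodize φ, continuous_periodize hφc hφU, fun q => finsum_nonneg fun k => hφ0 _,
    periodize_add_single φ, ?_⟩
  rwa [setIntegral_congr_fun hB fun q hq => by rw [periodize_eq_self hφU (hBcube hq)]]

theorem ae_forall_of_forall_ae_of_isClosed {α P : Type*} [MeasurableSpace α] {μ : Measure α}
    [TopologicalSpace P] [TopologicalSpace.SeparableSpace P] {Q : P → α → Prop}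
    (hQ : ∀ x, IsClosed {p | Q p x}) (h : ∀ p, ∀ᵐ x ∂μ, Q p x) : ∀ᵐ x ∂μ, ∀ p, Q p x := by
  obtain ⟨D, hDc, hD⟩ := TopologicalSpace.exists_countable_dense P
  filter_upwards [(ae_ball_iff hDc).2 fun p _ => h p] with x hx p
  exact (hQ x).closure_subset_iff.2 hx (hD p)

theorem ae_inner_add_hamiltonian_mul_nonneg_of_bddAbove {ι A : Type*} [Fintype ι]
    [DecidableEq ι] [TopologicalSpace A] [CompactSpace A]
    {c : EuclideanSpace ℝ ι → A → EuclideanSpace ℝ ι} (hc : Continuous ↿c)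
    {B : Set (ℝ × EuclideanSpace ℝ ι)} (hB : MeasurableSet B)
    (hBcube : B ⊆ {q | ∀ i, q.2 i ∈ Ico 0 1}) {m : ℝ × EuclideanSpace ℝ ι → ℝ}
    {w : ℝ × EuclideanSpace ℝ ι → EuclideanSpace ℝ ι} (hm : IntegrableOn m B)
    (hw : IntegrableOn w B) {S : Set ℝ}
    (hS : ∀ b : ℝ × EuclideanSpace ℝ ι → EuclideanSpace ℝ ι, Continuous b →
      (∀ t x i, b (t, x + EuclideanSpace.single i 1) = b (t, x)) →
      ∫ q in B, (-⟪b q, w q⟫ - hamiltonian c q.2 (b q) * m q) ∈ S)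
    (hbdd : BddAbove S) (p : EuclideanSpace ℝ ι) :
    ∀ᵐ q ∂volume.restrict B, 0 ≤ ⟪p, w q⟫ + hamiltonian c q.2 p * m q := by
  by_contra hp
  set g : ℝ × EuclideanSpace ℝ ι → ℝ := fun q => -⟪p, w q⟫ - hamiltonian c q.2 p * m q
  have hHp : Continuous fun x => hamiltonian c x p :=
    (continuous_hamiltonian hc).comp (continuous_id.prodMk continuous_const)
  obtain ⟨C, hC⟩ := ((isCompact_univ_pi fun _ => isCompact_Icc).image
    (PiLp.continuous_toLp 2 _)).exists_bound_of_continuousOn hHp.continuousOn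
  have hg : IntegrableOn g B := (hw.const_inner p).neg.sub <|
    hm.bdd_mul (hHp.comp continuous_snd).aestronglyMeasurable <|
      ae_restrict_of_forall_mem hB fun q hq =>
        hC _ ⟨q.2.ofLp, fun i _ => Ico_subset_Icc_self (hBcube hq i), rfl⟩
  obtain ⟨Φ, hΦc, hΦ0, hΦper, hΦpos⟩ := exists_periodic_integral_mul_pos hB hBcube hg
    fun h => hp (h.mono fun q hq => by simp only [g] at hq; linarith)
  have hmem (k : ℕ) : k * ∫ q in B, Φ q * g q ∈ S := by
    convert hS (fun q => ((k : ℝ) * Φ q) • p) (by fun_prop) (fun t x i => by simp only [hΦper])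
      using 1
    rw [← integral_const_mul]
    refine integral_congr_ae (ae_of_all _ fun q => ?_)
    simp only [g, real_inner_smul_left, hamiltonian_smul (mul_nonneg k.cast_nonneg (hΦ0 q))]
    ring
  obtain ⟨M, hM⟩ := hbdd
  obtain ⟨k, hk⟩ := exists_nat_gt (M / ∫ q in B, Φ q * g q)
  rw [div_lt_iff₀ hΦpos] at hk
  linarith [hM (hmem k)]

theorem conjugate_of_continuity_constraint_general {N : ℕ} (hN : 1 ≤ N)
    {A : Type*} [TopologicalSpace A] [CompactSpace A] [Nonempty A]
    (c : EuclideanSpace ℝ (Fin N) → A → EuclideanSpace ℝ (Fin N))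
    (hc : Continuous fun q : EuclideanSpace ℝ (Fin N) × A => c q.1 q.2)
    (hconv : ∀ x, Convex ℝ (Set.range (c x)))
    (c₀ : ℝ) (hc₀ : 0 < c₀)
    (hball : ∀ x, closedBall (0 : EuclideanSpace ℝ (Fin N)) c₀ ⊆ Set.range (c x))
    (H : EuclideanSpace ℝ (Fin N) → EuclideanSpace ℝ (Fin N) → ℝ)
    (hH : ∀ x p, H x p = ⨆ a : A, -⟪c x a, p⟫)
    (T : ℝ)
    -- the unit cube, a fundamental domain for the torus `T^N`
    (cube : Set (EuclideanSpace ℝ (Fin N)))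
    (hcube : cube = {x : EuclideanSpace ℝ (Fin N) | ∀ i, x i ∈ Set.Ico (0:ℝ) 1})
    -- `m ∈ L¹((0,T)×T^N)` and `w ∈ L¹((0,T)×T^N;ℝ^N)`, as `ℤ^N`-periodic functions in `x`
    (m : ℝ × EuclideanSpace ℝ (Fin N) → ℝ)
    (w : ℝ × EuclideanSpace ℝ (Fin N) → EuclideanSpace ℝ (Fin N))
    (hm1 : IntegrableOn m (Set.Ioo 0 T ×ˢ cube))
    (hw1 : IntegrableOn w (Set.Ioo 0 T ×ˢ cube))
    -- the set of values `∫₀^T∫_{T^N} (−b·w − H(x,b)m)` over continuous `b : [0,T]×T^N → ℝ^N`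
    (S : Set ℝ)
    (hS : S = {r : ℝ | ∃ b : ℝ × EuclideanSpace ℝ (Fin N) → EuclideanSpace ℝ (Fin N),
      Continuous b ∧
      (∀ t x (i : Fin N), b (t, x + EuclideanSpace.single i (1:ℝ)) = b (t, x)) ∧
      r = ∫ q in Set.Ioo 0 T ×ˢ cube, (-⟪b q, w q⟫ - H q.2 (b q) * m q)})
    -- the admissibility condition: `m ≥ 0` a.e. and `w(t,x) ∈ m(t,x)c(x,A)` a.e.
    (P : Prop)
    (hP : P ↔ ((∀ᵐ q ∂(volume.restrict (Set.Ioo 0 T ×ˢ cube)), 0 ≤ m q) ∧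
      (∀ᵐ q ∂(volume.restrict (Set.Ioo 0 T ×ˢ cube)), ∃ a : A, w q = m q • c q.2 a))) :
    (P → sSup S = 0) ∧ (¬ P → ¬ BddAbove S) := by
  subst hcube
  obtain rfl : H = hamiltonian c := funext₂ hH
  have hcx (x : EuclideanSpace ℝ (Fin N)) : Continuous (c x) := hc.comp (.prodMk_right x)
  have hzero : (0 : ℝ) ∈ S := by
    rw [hS]
    exact ⟨0, continuous_const, fun _ _ _ => rfl, by simp [hamiltonian_zero]⟩
  refine ⟨fun hPP => ?_, fun hnP hbdd => hnP (hP.2 ?_)⟩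
  · obtain ⟨hm0, hmw⟩ := hP.1 hPP
    have hle : ∀ r ∈ S, r ≤ 0 := by
      rw [hS]
      rintro _ ⟨b, -, -, rfl⟩
      refine integral_nonpos_of_ae ?_
      filter_upwards [hm0, hmw] with q hmq ⟨a, hwq⟩
      exact hwq ▸ neg_inner_sub_hamiltonian_mul_nonpos (hcx q.2) hmq (b q) a
    exact le_antisymm (csSup_le ⟨0, hzero⟩ hle) (le_csSup ⟨0, hle⟩ hzero)
  · have : NeZero N := ⟨by omega⟩
    have hcube : MeasurableSet {x : EuclideanSpace ℝ (Fin N) | ∀ i, x i ∈ Ico (0 : ℝ) 1} := by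
      simp only [ofPred_forall]
      exact .iInter fun i => measurableSet_Ico.preimage (by fun_prop)
    have h := ae_forall_of_forall_ae_of_isClosed
      (Q := fun p q => 0 ≤ ⟪p, w q⟫ + hamiltonian c q.2 p * m q)
      (fun q => isClosed_le continuous_const <| (continuous_id.inner continuous_const).add
        (((continuous_hamiltonian hc).comp (.prodMk_right q.2)).mul continuous_const))
      (ae_inner_add_hamiltonian_mul_nonneg_of_bddAbove hc
        (measurableSet_Ioo.prod hcube) (fun q hq => hq.2) hm1 hw1
        (fun b hb hper => by rw [hS]; exact ⟨b, hb, hper, rfl⟩) hbdd)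
    have hm0 := h.mono fun q hq =>
      nonneg_of_forall_inner_add_hamiltonian_mul_nonneg (hcx q.2) hc₀ (hball q.2) hq
    exact ⟨hm0, (hm0.and h).mono fun q hq =>
      exists_eq_smul_of_forall_inner_add_hamiltonian_mul_nonneg (hcx q.2) (hconv q.2) hq.1 hq.2⟩

/-- Computation of the conjugate `G*`: with
`Σ = sup_b ∫₀^T∫_{T^N} (−b·w − H(x,b) m)` over continuous vector fields `b` on `[0,T]×T^N`,
one has `Σ = 0` if `m ≥ 0` a.e. and `w(t,x) ∈ m(t,x)c(x,A)` a.e., and `Σ = +∞` (the family is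
unbounded above) otherwise. -/
theorem conjugate_of_continuity_constraint {N : ℕ} (hN : 1 ≤ N)
    {A : Type*} [TopologicalSpace A] [CompactSpace A] [Nonempty A]
    (c : EuclideanSpace ℝ (Fin N) → A → EuclideanSpace ℝ (Fin N))
    (hc : Continuous fun q : EuclideanSpace ℝ (Fin N) × A => c q.1 q.2)
    (Lc : NNReal) (hcLip : ∀ a : A, LipschitzWith Lc (fun x => c x a))
    (hconv : ∀ x, Convex ℝ (Set.range (c x)))
    (c₀ : ℝ) (hc₀ : 0 < c₀)
    (hball : ∀ x, closedBall (0 : EuclideanSpace ℝ (Fin N)) c₀ ⊆ Set.range (c x))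
    (hcper : ∀ (a : A) (x : EuclideanSpace ℝ (Fin N)) (i : Fin N),
      c (x + EuclideanSpace.single i (1:ℝ)) a = c x a)
    (H : EuclideanSpace ℝ (Fin N) → EuclideanSpace ℝ (Fin N) → ℝ)
    (hH : ∀ x p, H x p = ⨆ a : A, -⟪c x a, p⟫)
    (T : ℝ) (hT : 0 < T)
    -- the unit cube, a fundamental domain for the torus `T^N`
    (cube : Set (EuclideanSpace ℝ (Fin N)))
    (hcube : cube = {x : EuclideanSpace ℝ (Fin N) | ∀ i, x i ∈ Set.Ico (0:ℝ) 1})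
    -- `m ∈ L¹((0,T)×T^N)` and `w ∈ L¹((0,T)×T^N;ℝ^N)`, as `ℤ^N`-periodic functions in `x`
    (m : ℝ × EuclideanSpace ℝ (Fin N) → ℝ)
    (w : ℝ × EuclideanSpace ℝ (Fin N) → EuclideanSpace ℝ (Fin N))
    (hm1 : IntegrableOn m (Set.Ioo 0 T ×ˢ cube))
    (hw1 : IntegrableOn w (Set.Ioo 0 T ×ˢ cube))
    (hmper : ∀ t x (i : Fin N), m (t, x + EuclideanSpace.single i (1:ℝ)) = m (t, x))
    (hwper : ∀ t x (i : Fin N), w (t, x + EuclideanSpace.single i (1:ℝ)) = w (t, x))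
    -- the set of values `∫₀^T∫_{T^N} (−b·w − H(x,b)m)` over continuous `b : [0,T]×T^N → ℝ^N`
    (S : Set ℝ)
    (hS : S = {r : ℝ | ∃ b : ℝ × EuclideanSpace ℝ (Fin N) → EuclideanSpace ℝ (Fin N),
      Continuous b ∧
      (∀ t x (i : Fin N), b (t, x + EuclideanSpace.single i (1:ℝ)) = b (t, x)) ∧
      r = ∫ q in Set.Ioo 0 T ×ˢ cube, (-⟪b q, w q⟫ - H q.2 (b q) * m q)})
    -- the admissibility condition: `m ≥ 0` a.e. and `w(t,x) ∈ m(t,x)c(x,A)` a.e.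
    (P : Prop)
    (hP : P ↔ ((∀ᵐ q ∂(volume.restrict (Set.Ioo 0 T ×ˢ cube)), 0 ≤ m q) ∧
      (∀ᵐ q ∂(volume.restrict (Set.Ioo 0 T ×ˢ cube)), ∃ a : A, w q = m q • c q.2 a))) :
    (P → sSup S = 0) ∧ (¬ P → ¬ BddAbove S) :=
  conjugate_of_continuity_constraint_general hN c hc hconv c₀ hc₀ hball H hH T cube hcube m w hm1
    hw1 S hS P hP
end

section
/- Assume c(x,A) is convex for every x. Let T > 0, let K ⊆ [0,T]×ℝ^N be compact, and let ν : K → ℝ^N be continuous. Then for every ε > 0 there exists a continuous vector field ṽ : [0,T]×ℝ^N → ℝ^N such that ṽ(t,x) ∈ c(x,A) for all (t,x) ∈ [0,T]×ℝ^N and −ṽ(t,x)·ν(t,x) ≥ H(x,ν(t,x)) − ε for all (t,x) ∈ K. -/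
/-!
Extend `ν` continuously to all of `ℝ×ℝ^N`, then select from the convex sets
`c(x,A) ∩ {v | H(x,ν(t,x)) − ε ≤ −v·ν(t,x)}`. Locally a single control `a₀` that is `ε`-optimal
at one point stays `ε`-optimal nearby, because `x ↦ H(x,ν(t,x))` is continuous (`A` is compact);
so `(t,x) ↦ c(x,a₀)` is a local continuous selection, and a partition of unity glues these local
selections, convexity keeping the glued field inside the sets.
-/

open Set Function Topology RealInnerProductSpace

universe u v

theorem Continuous.iSup_of_compactSpace {X A α : Type*} [TopologicalSpace X] [TopologicalSpace A]
    [CompactSpace A] [ConditionallyCompleteLinearOrder α] [TopologicalSpace α] [OrderTopology α]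
    {f : X → A → α} (hf : Continuous (uncurry f)) : Continuous fun x => ⨆ a, f x a := by
  simpa only [iSup, image_univ] using isCompact_univ.continuous_sSup hf

theorem exists_eventually_iSup_sub_lt {X A : Type*} [TopologicalSpace X] [TopologicalSpace A]
    [CompactSpace A] [Nonempty A] {φ : X → A → ℝ} (hφ : Continuous (uncurry φ)) (x : X)
    {ε : ℝ} (hε : 0 < ε) : ∃ a₀, ∀ᶠ y in 𝓝 x, (⨆ a, φ y a) - ε < φ y a₀ := by
  obtain ⟨a₀, ha₀⟩ := exists_lt_of_lt_ciSup (sub_lt_self (⨆ a, φ x a) hε)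
  exact ⟨a₀, ((hφ.iSup_of_compactSpace.sub continuous_const).continuousAt.eventually_lt
    (hφ.comp (continuous_id.prodMk continuous_const)).continuousAt ha₀)⟩

theorem concaveOn_neg_inner_left {E : Type*} [NormedAddCommGroup E] [InnerProductSpace ℝ E]
    (p : E) : ConcaveOn ℝ univ fun v => -⟪v, p⟫ := by
  simp_rw [real_inner_comm p]
  exact (-innerₛₗ ℝ p).concaveOn convex_univ

theorem ContinuousOn.exists_continuousMap_eqOn {X : Type u} {Y : Type v} [TopologicalSpace X]
    [NormalSpace X] [TopologicalSpace Y] [TietzeExtension.{u, v} Y] {s : Set X} (hs : IsClosed s)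
    {f : X → Y} (hf : ContinuousOn f s) : ∃ g : C(X, Y), EqOn g f s := by
  obtain ⟨g, hg⟩ := (⟨s.domRestrict f, hf.domRestrict⟩ : C(s, Y)).exists_restrict_eq hs
  exact ⟨g, fun x hx => congr($hg ⟨x, hx⟩)⟩

theorem exists_continuous_selection_iSup_sub_le {X A E : Type*} [TopologicalSpace X]
    [NormalSpace X] [ParacompactSpace X] [TopologicalSpace A] [CompactSpace A] [Nonempty A]
    [AddCommGroup E] [Module ℝ E] [TopologicalSpace E] [ContinuousAdd E] [ContinuousSMul ℝ E]
    {f : X → A → E} (hf : Continuous (uncurry f)) (hconv : ∀ x, Convex ℝ (range (f x)))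
    {ℓ : X → E → ℝ} (hℓ : Continuous (uncurry ℓ)) (hℓconc : ∀ x, ConcaveOn ℝ univ (ℓ x))
    {ε : ℝ} (hε : 0 < ε) :
    ∃ g : C(X, E), ∀ x, g x ∈ range (f x) ∧ (⨆ a, ℓ x (f x a)) - ε ≤ ℓ x (g x) := by
  have hφ : Continuous fun q : X × A => ℓ q.1 (f q.1 q.2) :=
    hℓ.comp (continuous_fst.prodMk hf)
  have hlocal (x : X) : ∃ U ∈ 𝓝 x, ∃ g : X → E, ContinuousOn g U ∧
      ∀ y ∈ U, g y ∈ range (f y) ∩ {v ∈ univ | (⨆ a, ℓ y (f y a)) - ε ≤ ℓ y v} := by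
    obtain ⟨a₀, ha₀⟩ := exists_eventually_iSup_sub_lt (φ := fun y a => ℓ y (f y a)) hφ x hε
    exact ⟨_, ha₀, fun y => f y a₀, (hf.comp (continuous_id.prodMk continuous_const)).continuousOn,
      fun y hy => ⟨mem_range_self a₀, mem_univ _, hy.le⟩⟩
  obtain ⟨g, hg⟩ := exists_continuous_forall_mem_convex_of_local
    (fun x => (hconv x).inter ((hℓconc x).convex_ge _)) hlocal
  exact ⟨g, fun x => ⟨(hg x).1, (hg x).2.2⟩⟩

theorem continuous_almost_optimal_field_general {N : ℕ}
    {A : Type*} [TopologicalSpace A] [CompactSpace A] [Nonempty A]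
    (c : EuclideanSpace ℝ (Fin N) → A → EuclideanSpace ℝ (Fin N))
    (hc : Continuous fun q : EuclideanSpace ℝ (Fin N) × A => c q.1 q.2)
    (hconv : ∀ x, Convex ℝ (Set.range (c x)))
    (H : EuclideanSpace ℝ (Fin N) → EuclideanSpace ℝ (Fin N) → ℝ)
    (hH : ∀ x p, H x p = ⨆ a : A, -⟪c x a, p⟫)
    (K : Set (ℝ × EuclideanSpace ℝ (Fin N))) (hK : IsCompact K)
    (ν : ℝ × EuclideanSpace ℝ (Fin N) → EuclideanSpace ℝ (Fin N))
    (hν : ContinuousOn ν K) :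
    ∀ ε : ℝ, 0 < ε →
      ∃ vt : ℝ × EuclideanSpace ℝ (Fin N) → EuclideanSpace ℝ (Fin N),
        Continuous vt ∧ (∀ t x, vt (t, x) ∈ Set.range (c x)) ∧
        ∀ q ∈ K, H q.2 (ν q) - ε ≤ -⟪vt q, ν q⟫ := by
  intro ε hε
  obtain ⟨ν', hν'⟩ := hν.exists_continuousMap_eqOn hK.isClosed
  obtain ⟨g, hg⟩ := exists_continuous_selection_iSup_sub_le (X := ℝ × EuclideanSpace ℝ (Fin N))
    (f := fun q => c q.2) (hc.comp (continuous_snd.prodMap continuous_id)) (fun q => hconv q.2)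
    (ℓ := fun q v => -⟪v, ν' q⟫) (by fun_prop) (fun q => concaveOn_neg_inner_left (ν' q)) hε
  refine ⟨g, g.continuous, fun t x => (hg (t, x)).1, fun q hq => ?_⟩
  simpa only [hH, hν' hq] using (hg q).2

/-- Construction of a continuous selection: if `c(x,A)` is convex for every
`x`, `K ⊆ [0,T]×ℝ^N` is compact and `ν` is continuous on `K`, then for every `ε > 0` there is a
continuous vector field `vt` with `vt(t,x) ∈ c(x,A)` everywhere and
`−vt(t,x)·ν(t,x) ≥ H(x,ν(t,x)) − ε` on `K`. -/
theorem continuous_almost_optimal_field {N : ℕ} (hN : 1 ≤ N)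
    {A : Type*} [TopologicalSpace A] [CompactSpace A] [Nonempty A]
    (c : EuclideanSpace ℝ (Fin N) → A → EuclideanSpace ℝ (Fin N))
    (hc : Continuous fun q : EuclideanSpace ℝ (Fin N) × A => c q.1 q.2)
    (hconv : ∀ x, Convex ℝ (Set.range (c x)))
    (H : EuclideanSpace ℝ (Fin N) → EuclideanSpace ℝ (Fin N) → ℝ)
    (hH : ∀ x p, H x p = ⨆ a : A, -⟪c x a, p⟫)
    (T : ℝ) (hT : 0 < T)
    (K : Set (ℝ × EuclideanSpace ℝ (Fin N))) (hK : IsCompact K)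
    (hKsub : K ⊆ Set.Icc 0 T ×ˢ (Set.univ : Set (EuclideanSpace ℝ (Fin N))))
    (ν : ℝ × EuclideanSpace ℝ (Fin N) → EuclideanSpace ℝ (Fin N))
    (hν : ContinuousOn ν K) :
    ∀ ε : ℝ, 0 < ε →
      ∃ vt : ℝ × EuclideanSpace ℝ (Fin N) → EuclideanSpace ℝ (Fin N),
        Continuous vt ∧ (∀ t x, vt (t, x) ∈ Set.range (c x)) ∧
        ∀ q ∈ K, H q.2 (ν q) - ε ≤ -⟪vt q, ν q⟫ :=
  continuous_almost_optimal_field_general c hc hconv H hH K hK ν hν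
end

section
/- Let c₀ > 0, L ≥ 0, ε > 0 with εL/c₀ ≤ 1, and let S(x) ⊆ ℝ^N, for x ∈ ℝ^N, be convex sets such that B̄(0,c₀) ⊆ S(x) for every x and S(y) ⊆ S(x) + L|x−y|·B̄(0,1) for all x,y. Then for every λ ∈ [0, 1 − εL/c₀] and all x, y with |x−y| ≤ ε, one has λ·S(y) ⊆ S(x). -/
open Metric Pointwise

/-!
Write a point of `S y` as `a + b` with `a ∈ S x` and `‖b‖ ≤ L‖x - y‖ ≤ Lε`. For `λ ≤ 1 - εL/c₀`
the perturbation `λ • b` has norm at most `(1 - λ) c₀`, so it lies in `(1 - λ) • B̄(0, c₀)`, and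
`λ • (a + b) ∈ λ • S x + (1 - λ) • S x ⊆ S x` by convexity.
-/

theorem smul_subset_of_subset_add_closedBall {E : Type*} [NormedAddCommGroup E]
    [NormedSpace ℝ E] {C D : Set E} {r δ l : ℝ} (hC : Convex ℝ C) (hr : 0 ≤ r)
    (hrC : closedBall 0 r ⊆ C) (hD : D ⊆ C + closedBall 0 δ) (hl₀ : 0 ≤ l) (hl₁ : l ≤ 1)
    (hlδ : l * δ ≤ (1 - l) * r) : l • D ⊆ C := by
  have hperturb : l • closedBall (0 : E) δ ⊆ (1 - l) • C := by
    rintro _ ⟨b, hb, rfl⟩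
    refine Set.smul_set_mono hrC ?_
    rw [smul_closedBall _ _ hr, smul_zero, Real.norm_of_nonneg (sub_nonneg.2 hl₁),
      mem_closedBall_zero_iff, norm_smul, Real.norm_of_nonneg hl₀]
    exact (mul_le_mul_of_nonneg_left (mem_closedBall_zero_iff.1 hb) hl₀).trans hlδ
  calc l • D ⊆ l • C + l • closedBall 0 δ := smul_add l C _ ▸ Set.smul_set_mono hD
    _ ⊆ l • C + (1 - l) • C := Set.add_subset_add_left hperturb
    _ ⊆ C := hC.set_combo_subset hl₀ (sub_nonneg.2 hl₁) (by ring)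

theorem scaled_set_inclusion_general {N : ℕ}
    (c₀ L ε : ℝ) (hc₀ : 0 < c₀) (hL : 0 ≤ L)
    (S : EuclideanSpace ℝ (Fin N) → Set (EuclideanSpace ℝ (Fin N)))
    (hconv : ∀ x, Convex ℝ (S x))
    (hball : ∀ x, closedBall (0 : EuclideanSpace ℝ (Fin N)) c₀ ⊆ S x)
    (hLip : ∀ x y, S y ⊆ S x + (L * ‖x - y‖) • closedBall (0 : EuclideanSpace ℝ (Fin N)) 1) :
    ∀ l ∈ Set.Icc (0:ℝ) (1 - ε * L / c₀), ∀ x y : EuclideanSpace ℝ (Fin N),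
      ‖x - y‖ ≤ ε → l • S y ⊆ S x := by
  rintro l ⟨hl₀, hl⟩ x y hxy
  have hLxy : 0 ≤ L * ‖x - y‖ := mul_nonneg hL (norm_nonneg _)
  have hε : 0 ≤ ε := (norm_nonneg _).trans hxy
  have hεL : ε * L ≤ (1 - l) * c₀ := (div_le_iff₀ hc₀).1 (le_sub_comm.1 hl)
  have hl₁ : l ≤ 1 := hl.trans (sub_le_self _ (by positivity))
  refine smul_subset_of_subset_add_closedBall (hconv x) hc₀.le (hball x) ?_ hl₀ hl₁
    (δ := L * ‖x - y‖) ?_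
  · simpa only [smul_unitClosedBall_of_nonneg hLxy] using hLip x y
  · calc l * (L * ‖x - y‖) ≤ L * ‖x - y‖ := mul_le_of_le_one_left hLxy hl₁
      _ ≤ ε * L := (mul_le_mul_of_nonneg_left hxy hL).trans_eq (mul_comm _ _)
      _ ≤ (1 - l) * c₀ := hεL

/-- If each `S(x)` is convex, contains `B̄(0,c₀)`, and
`S(y) ⊆ S(x) + L|x−y|·B̄(0,1)`, then for `λ ∈ [0, 1 − εL/c₀]` and `|x−y| ≤ ε` one has
`λ·S(y) ⊆ S(x)`. -/
theorem scaled_set_inclusion {N : ℕ} (hN : 1 ≤ N)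
    (c₀ L ε : ℝ) (hc₀ : 0 < c₀) (hL : 0 ≤ L) (hε : 0 < ε) (hεL : ε * L / c₀ ≤ 1)
    (S : EuclideanSpace ℝ (Fin N) → Set (EuclideanSpace ℝ (Fin N)))
    (hconv : ∀ x, Convex ℝ (S x))
    (hball : ∀ x, closedBall (0 : EuclideanSpace ℝ (Fin N)) c₀ ⊆ S x)
    (hLip : ∀ x y, S y ⊆ S x + (L * ‖x - y‖) • closedBall (0 : EuclideanSpace ℝ (Fin N)) 1) :
    ∀ l ∈ Set.Icc (0:ℝ) (1 - ε * L / c₀), ∀ x y : EuclideanSpace ℝ (Fin N),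
      ‖x - y‖ ≤ ε → l • S y ⊆ S x :=
  scaled_set_inclusion_general c₀ L ε hc₀ hL S hconv hball hLip
end

section
/- Assume c(x,A) is convex and closed for every x, B̄(0,c₀) ⊆ c(x,A) for all x for some c₀ > 0, and c(y,A) ⊆ c(x,A) + L|x−y|·B̄(0,1) for all x,y, for some L ≥ 0. Let ε > 0 with εL/c₀ ≤ 1 and let λ ∈ (0, 1 − εL/c₀]. Let ξ : ℝ×ℝ^N → [0,∞) be smooth with support in the ball of radius ε and total integral 1. Let m ∈ L¹(ℝ×ℝ^N) with m ≥ 0 a.e. and w ∈ L¹(ℝ×ℝ^N;ℝ^N) with w(s,y) ∈ m(s,y)·c(y,A) for a.e. (s,y). Then for every (t,x): λ·(ξ ∗ w)(t,x) ∈ (ξ ∗ m)(t,x)·c(x,A), where ∗ denotes convolution on ℝ×ℝ^N. -/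
open MeasureTheory Metric Pointwise

set_option maxHeartbeats 1000000 in
/-- Convolution preserves the constraint: if `w(s,y) ∈ m(s,y)·c(y,A)` a.e.,
`λ ∈ (0, 1 − εL/c₀]`, and `ξ` is a smooth nonnegative kernel supported in the ball of radius
`ε` with total integral `1`, then `λ·(ξ ∗ w)(t,x) ∈ (ξ ∗ m)(t,x)·c(x,A)` for every `(t,x)`. -/
theorem convolution_constraint {N : ℕ} (hN : 1 ≤ N)
    {A : Type*} [TopologicalSpace A] [CompactSpace A] [Nonempty A]
    (c : EuclideanSpace ℝ (Fin N) → A → EuclideanSpace ℝ (Fin N))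
    (hc : Continuous fun q : EuclideanSpace ℝ (Fin N) × A => c q.1 q.2)
    (hconv : ∀ x, Convex ℝ (Set.range (c x)))
    (hclosed : ∀ x, IsClosed (Set.range (c x)))
    (c₀ : ℝ) (hc₀ : 0 < c₀)
    (hball : ∀ x, closedBall (0 : EuclideanSpace ℝ (Fin N)) c₀ ⊆ Set.range (c x))
    (L : ℝ) (hL : 0 ≤ L)
    (hLip : ∀ x y : EuclideanSpace ℝ (Fin N), Set.range (c y) ⊆
      Set.range (c x) + (L * ‖x - y‖) • closedBall (0 : EuclideanSpace ℝ (Fin N)) 1)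
    (ε : ℝ) (hε : 0 < ε) (hεL : ε * L / c₀ ≤ 1)
    (l : ℝ) (hl : l ∈ Set.Ioc (0:ℝ) (1 - ε * L / c₀))
    -- the convolution kernel
    (ξ : ℝ × EuclideanSpace ℝ (Fin N) → ℝ) (hξsmooth : ContDiff ℝ (⊤ : ℕ∞) ξ)
    (hξpos : ∀ q, 0 ≤ ξ q)
    (hξsupp : Function.support ξ ⊆ ball (0 : ℝ × EuclideanSpace ℝ (Fin N)) ε)
    (hξint : Integrable ξ) (hξone : ∫ q, ξ q = 1)
    -- `m` and `w`
    (m : ℝ × EuclideanSpace ℝ (Fin N) → ℝ) (hm1 : Integrable m)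
    (hmpos : ∀ᵐ q ∂(volume : Measure (ℝ × EuclideanSpace ℝ (Fin N))), 0 ≤ m q)
    (w : ℝ × EuclideanSpace ℝ (Fin N) → EuclideanSpace ℝ (Fin N)) (hw1 : Integrable w)
    (hwcon : ∀ᵐ q ∂(volume : Measure (ℝ × EuclideanSpace ℝ (Fin N))),
      ∃ a : A, w q = m q • c q.2 a) :
    ∀ (t : ℝ) (x : EuclideanSpace ℝ (Fin N)),
      l • (∫ q, ξ q • w ((t, x) - q)) ∈
        (∫ q, ξ q * m ((t, x) - q)) • Set.range (c x) := by
  intro t x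
  set p : ℝ × EuclideanSpace ℝ (Fin N) := (t, x) with hp
  have hl0 : 0 < l := hl.1
  have hεL0 : 0 ≤ ε * L / c₀ := div_nonneg (mul_nonneg hε.le hL) hc₀.le
  have hle1 : l ≤ 1 := hl.2.trans (by linarith)
  -- the constraint set is compact and contains `0`
  have hcx : Continuous (c x) := hc.comp (Continuous.prodMk_right x)
  have hCcomp : IsCompact (Set.range (c x)) := isCompact_range hcx
  have h0C : (0 : EuclideanSpace ℝ (Fin N)) ∈ Set.range (c x) :=
    hball x (mem_closedBall_self hc₀.le)
  -- key pointwise fact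
  have key : ∀ y : EuclideanSpace ℝ (Fin N), ‖x - y‖ ≤ ε → ∀ a : A,
      l • c y a ∈ Set.range (c x) := by
    intro y hy a
    obtain ⟨u, hu, v, hv, huv⟩ := Set.mem_add.mp (hLip x y (Set.mem_range_self a))
    obtain ⟨b, hb, hbv⟩ := Set.mem_smul_set.mp hv
    have hbnorm : ‖b‖ ≤ 1 := mem_closedBall_zero_iff.mp hb
    have hvnorm : ‖v‖ ≤ L * ε := by
      rw [← hbv, norm_smul, Real.norm_eq_abs,
        abs_of_nonneg (mul_nonneg hL (norm_nonneg _))]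
      calc L * ‖x - y‖ * ‖b‖ ≤ L * ε * 1 := by
            apply mul_le_mul (mul_le_mul_of_nonneg_left hy hL) hbnorm (norm_nonneg _)
            exact mul_nonneg hL hε.le
        _ = L * ε := by ring
    set β := l * (ε * L) / c₀ with hβdef
    have hβ0 : 0 ≤ β := div_nonneg (mul_nonneg hl0.le (mul_nonneg hε.le hL)) hc₀.le
    have hβle : β ≤ ε * L / c₀ := by
      rw [hβdef, div_le_div_iff₀ hc₀ hc₀]
      nlinarith [mul_nonneg (sub_nonneg.mpr hle1)
        (mul_nonneg (mul_nonneg hε.le hL) hc₀.le)]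
    have hsum : l + β ≤ 1 := by
      have := hl.2; linarith
    obtain ⟨z, hz, hvz⟩ : ∃ z ∈ Set.range (c x), l • v = β • z := by
      rcases eq_or_lt_of_le hβ0 with h0 | h0
      · -- β = 0, hence ε * L = 0 and v = 0
        have hεLzero : ε * L = 0 := by
          by_contra hne
          have h1 : 0 < ε * L := lt_of_le_of_ne (mul_nonneg hε.le hL) (Ne.symm hne)
          have h2 : 0 < β := by rw [hβdef]; positivity
          rw [← h0] at h2; exact lt_irrefl 0 h2
        have hv0 : v = 0 := by
          have h3 : L * ε = 0 := by rw [mul_comm]; exact hεLzero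
          have hnorm : ‖v‖ ≤ 0 := by linarith [hvnorm]
          exact norm_le_zero_iff.mp hnorm
        exact ⟨0, h0C, by rw [hv0, smul_zero, smul_zero]⟩
      · refine ⟨β⁻¹ • (l • v), hball x ?_, (smul_inv_smul₀ (ne_of_gt h0) _).symm⟩
        rw [mem_closedBall_zero_iff, norm_smul, norm_smul, Real.norm_eq_abs,
          Real.norm_eq_abs, abs_of_pos (inv_pos.mpr h0), abs_of_pos hl0]
        rw [inv_mul_le_iff₀ h0]
        have hβc : β * c₀ = l * (ε * L) := by
          rw [hβdef]; field_simp
        calc l * ‖v‖ ≤ l * (L * ε) := mul_le_mul_of_nonneg_left hvnorm hl0.le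
          _ = β * c₀ := by rw [hβc]; ring
    -- convex combination with `0`
    have hspos : 0 < l + β := by linarith
    have h1 : (l/(l+β)) • u + (β/(l+β)) • z ∈ Set.range (c x) :=
      hconv x hu hz (div_nonneg hl0.le hspos.le) (div_nonneg hβ0 hspos.le)
        (by field_simp)
    have h2 : (l+β) • ((l/(l+β)) • u + (β/(l+β)) • z)
        + (1 - (l+β)) • (0 : EuclideanSpace ℝ (Fin N)) ∈ Set.range (c x) :=
      hconv x h1 h0C hspos.le (by linarith) (by ring)
    have hs0 : (l+β) ≠ 0 := ne_of_gt hspos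
    rw [smul_add, smul_smul, smul_smul, mul_div_cancel₀ _ hs0, mul_div_cancel₀ _ hs0,
      smul_zero, add_zero] at h2
    rw [← huv, smul_add, hvz]
    exact h2
  -- the shift `q ↦ p - q` is measure preserving
  have mp : MeasurePreserving (fun q : ℝ × EuclideanSpace ℝ (Fin N) => p - q)
      volume volume := by
    have hneg : MeasurePreserving (fun q : ℝ × EuclideanSpace ℝ (Fin N) => -q)
        volume volume := by
      rw [Measure.volume_eq_prod]
      exact (Measure.measurePreserving_neg volume).prod (Measure.measurePreserving_neg volume)
    have hadd : MeasurePreserving (fun q : ℝ × EuclideanSpace ℝ (Fin N) => p + q)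
        volume volume := by
      rw [Measure.volume_eq_prod]
      exact (measurePreserving_add_left volume p.1).prod (measurePreserving_add_left volume p.2)
    simpa [Function.comp_def, sub_eq_add_neg] using hadd.comp hneg
  have hm' : Integrable (fun q => m (p - q)) volume := by
    simpa [Function.comp_def] using (mp.integrable_comp hm1.aestronglyMeasurable).mpr hm1
  have hw' : Integrable (fun q => w (p - q)) volume := by
    simpa [Function.comp_def] using (mp.integrable_comp hw1.aestronglyMeasurable).mpr hw1
  have hmpos' : ∀ᵐ q ∂(volume : Measure (ℝ × EuclideanSpace ℝ (Fin N))), 0 ≤ m (p - q) :=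
    mp.quasiMeasurePreserving.ae hmpos
  have hwcon' : ∀ᵐ q ∂(volume : Measure (ℝ × EuclideanSpace ℝ (Fin N))),
      ∃ a : A, w (p - q) = m (p - q) • c ((p - q).2) a :=
    mp.quasiMeasurePreserving.ae hwcon
  -- bound on `ξ`
  have hξcont : Continuous ξ := hξsmooth.continuous
  have hξcs : HasCompactSupport ξ :=
    HasCompactSupport.intro (isCompact_closedBall (0 : ℝ × EuclideanSpace ℝ (Fin N)) ε)
      (fun q hq => by
        by_contra h
        exact hq (ball_subset_closedBall (hξsupp (Function.mem_support.mpr h))))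
  obtain ⟨K, hK⟩ := hξcs.exists_bound_of_continuous hξcont
  -- integrability of the two integrands
  have hg : Integrable (fun q => ξ q * m (p - q)) volume :=
    hm'.bdd_mul hξcont.aestronglyMeasurable (Filter.Eventually.of_forall hK)
  have hf : Integrable (fun q => ξ q • w (p - q)) volume := by
    refine (hw'.norm.const_mul K).mono'
      (hξcont.aestronglyMeasurable.smul hw'.aestronglyMeasurable) ?_
    filter_upwards with q
    rw [norm_smul]
    exact mul_le_mul_of_nonneg_right (hK q) (norm_nonneg _)
  -- main argument: Hahn-Banach separation
  set I := ∫ q, ξ q * m (p - q) with hIdef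
  by_contra hmem
  have hICconv : Convex ℝ (I • Set.range (c x)) := (hconv x).smul I
  have hICclosed : IsClosed (I • Set.range (c x)) := (hCcomp.smul I).isClosed
  obtain ⟨φ, s, hφ1, hφ2⟩ := geometric_hahn_banach_closed_point hICconv hICclosed hmem
  obtain ⟨z₀, hz₀C, hz₀max⟩ := hCcomp.exists_isMaxOn
    ⟨c x (Classical.arbitrary A), Set.mem_range_self _⟩ φ.continuous.continuousOn
  have hptwise : ∀ᵐ q ∂(volume : Measure (ℝ × EuclideanSpace ℝ (Fin N))),
      φ (l • (ξ q • w (p - q))) ≤ (ξ q * m (p - q)) * φ z₀ := by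
    filter_upwards [hwcon', hmpos'] with q hcon hpos
    by_cases hq : ξ q = 0
    · simp [hq]
    · have hqball : q ∈ ball (0 : ℝ × EuclideanSpace ℝ (Fin N)) ε :=
        hξsupp (Function.mem_support.mpr hq)
      have hq2 : ‖q.2‖ ≤ ε :=
        le_trans (norm_snd_le q) (le_of_lt (mem_ball_zero_iff.mp hqball))
      obtain ⟨a, ha⟩ := hcon
      have hy : ‖x - (p - q).2‖ ≤ ε := by
        have hxy : (p - q).2 = x - q.2 := rfl
        rw [hxy]
        simpa using hq2
      have hmemC := key _ hy a
      have hφle : φ (l • c ((p - q).2) a) ≤ φ z₀ := hz₀max hmemC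
      have hφeq : φ (l • (ξ q • w (p - q))) =
          ξ q * (m (p - q) * φ (l • c ((p - q).2) a)) := by
        simp only [ha, ContinuousLinearMap.map_smul, smul_eq_mul]
        ring
      rw [hφeq]
      calc ξ q * (m (p - q) * φ (l • c ((p - q).2) a))
          ≤ ξ q * (m (p - q) * φ z₀) :=
            mul_le_mul_of_nonneg_left (mul_le_mul_of_nonneg_left hφle hpos) (hξpos q)
        _ = (ξ q * m (p - q)) * φ z₀ := by ring
  have hfl : Integrable (fun q => l • (ξ q • w (p - q))) volume := hf.smul l
  have hφf : Integrable (fun q => φ (l • (ξ q • w (p - q)))) volume :=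
    φ.integrable_comp hfl
  have hgφ : Integrable (fun q => (ξ q * m (p - q)) * φ z₀) volume := hg.mul_const _
  have hle : (∫ q, φ (l • (ξ q • w (p - q)))) ≤ ∫ q, (ξ q * m (p - q)) * φ z₀ :=
    integral_mono_ae hφf hgφ hptwise
  have hcomm : (∫ q, φ (l • (ξ q • w (p - q)))) = φ (l • ∫ q, ξ q • w (p - q)) := by
    have h := φ.integral_comp_comm hfl
    rw [integral_smul] at h
    exact h
  have hrhs : (∫ q, (ξ q * m (p - q)) * φ z₀) = I * φ z₀ := integral_mul_const _ _
  have h1 : φ (I • z₀) < s := hφ1 _ ⟨z₀, hz₀C, rfl⟩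
  have h2 : s < φ (l • ∫ q, ξ q • w (p - q)) := hφ2
  have h3 : φ (I • z₀) = I * φ z₀ := by rw [φ.map_smul, smul_eq_mul]
  rw [hcomm, hrhs] at hle
  linarith
end

section
/- Let N ≥ 1, p > N+1 and q = p/(p−1). There is a constant C, depending only on p and N, such that for every measurable f : ℝ×ℝ^N → [0,∞], every x, θ ∈ ℝ^N, every 0 ≤ t < s, and every measurable set R ⊆ ℝ^N of finite Lebesgue measure |R|: ∫_R ∫_t^{(t+s)/2} f(τ, x + (σ+θ)(τ−t)) dτ dσ ≤ C |R|^{1/q} ‖f‖_{L^p(ℝ×ℝ^N)} (s−t)^{1−(N+1)/p}. -/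
open MeasureTheory ENNReal Module

/-!
After exchanging the order of integration, fix the time `τ`. Hölder's inequality in `σ` over `R`
followed by the substitution `y = x + (τ - t) • (σ + θ)` bounds the inner integral by
`|R|^{1/q} (τ - t)^{-N/p} ‖f(τ, ·)‖_p`, the power of `τ - t` being the Jacobian of the
substitution. Hölder once more, now in `τ`, leaves `∫_t^{(t+s)/2} (τ - t)^{-Nq/p} dτ`, which is
finite exactly because `p > N + 1` means `Nq/p < 1`; its value `((s - t)/2)^{1 - Nq/p} / (1 - Nq/p)`
raised to the power `1/q` is a constant times `(s - t)^{1 - (N + 1)/p}`.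
-/

theorem setLIntegral_le_measure_rpow_mul_lintegral_rpow {α : Type*} [MeasurableSpace α]
    {μ : Measure α} {p q : ℝ} (hpq : p.HolderConjugate q) {h : α → ℝ≥0∞} (R : Set α)
    (hh : AEMeasurable h (μ.restrict R)) :
    ∫⁻ a in R, h a ∂μ ≤ μ R ^ (1 / q) * (∫⁻ a in R, h a ^ p ∂μ) ^ (1 / p) := by
  have holder := ENNReal.lintegral_mul_norm_pow_le (aemeasurable_const (b := (1 : ℝ≥0∞)))
    (hh.pow_const p) (one_div_nonneg.2 hpq.symm.nonneg) (one_div_nonneg.2 hpq.nonneg)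
    (by rw [one_div, one_div, add_comm]; exact hpq.inv_add_inv_eq_one)
  simpa [← ENNReal.rpow_mul, hpq.ne_zero] using holder

theorem lintegral_Ioc_sub_rpow_neg {a : ℝ} (ha : a < 1) {t u : ℝ} (htu : t ≤ u) :
    ∫⁻ τ in Set.Ioc t u, ENNReal.ofReal ((τ - t) ^ (-a)) =
      ENNReal.ofReal ((u - t) ^ (1 - a) / (1 - a)) := by
  have hint : IntegrableOn (fun τ : ℝ => (τ - t) ^ (-a)) (Set.Ioc t u) := by
    rw [← intervalIntegrable_iff_integrableOn_Ioc_of_le htu]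
    simpa using (intervalIntegral.intervalIntegrable_rpow' (a := 0) (b := u - t)
      (by linarith : -1 < -a)).comp_sub_right t
  rw [← ofReal_integral_eq_lintegral_ofReal hint ((ae_restrict_iff' measurableSet_Ioc).2
      (ae_of_all _ fun τ hτ => Real.rpow_nonneg (by linarith [hτ.1]) _)),
    ← intervalIntegral.integral_of_le htu,
    intervalIntegral.integral_comp_sub_right (fun τ => τ ^ (-a)) t, sub_self,
    integral_rpow (Or.inl (by linarith)), Real.zero_rpow (by linarith), neg_add_eq_sub, sub_zero]

section AddHaar

variable {E : Type*} [NormedAddCommGroup E] [NormedSpace ℝ E] [MeasurableSpace E] [BorelSpace E]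
  [FiniteDimensional ℝ E] (μ : Measure E) [μ.IsAddHaarMeasure]

theorem lintegral_comp_smul_add {c : ℝ} (hc : 0 < c) (g : E → ℝ≥0∞) (v : E) :
    ∫⁻ σ, g (c • σ + v) ∂μ = ENNReal.ofReal (c ^ (-(finrank ℝ E : ℝ))) * ∫⁻ y, g y ∂μ := by
  let e := (Homeomorph.smulOfNeZero (α := E) c hc.ne').toMeasurableEquiv
  calc ∫⁻ σ, g (c • σ + v) ∂μ = ∫⁻ y, g (y + v) ∂(μ.map e) :=
        (lintegral_map_equiv (fun y => g (y + v)) e).symm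
    _ = ENNReal.ofReal (c ^ (-(finrank ℝ E : ℝ))) * ∫⁻ y, g y ∂μ := by
        rw [show ⇑e = (c • ·) from rfl, Measure.map_addHaar_smul μ hc.ne', lintegral_smul_measure,
          lintegral_add_right_eq_self g v, smul_eq_mul, abs_of_pos (by positivity),
          ← Real.rpow_natCast, ← Real.rpow_neg hc.le]

theorem setLIntegral_comp_smul_add_le {p q : ℝ} (hpq : p.HolderConjugate q) {g : E → ℝ≥0∞}
    (hg : Measurable g) {c : ℝ} (hc : 0 < c) (v : E) (R : Set E) :
    ∫⁻ σ in R, g (c • σ + v) ∂μ ≤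
      μ R ^ (1 / q) * (ENNReal.ofReal (c ^ (-(finrank ℝ E : ℝ))) * ∫⁻ y, g y ^ p ∂μ) ^ (1 / p) := by
  have hgc : Measurable fun σ => g (c • σ + v) := hg.comp ((measurable_const_smul c).add_const v)
  calc ∫⁻ σ in R, g (c • σ + v) ∂μ
      ≤ μ R ^ (1 / q) * (∫⁻ σ in R, g (c • σ + v) ^ p ∂μ) ^ (1 / p) :=
        setLIntegral_le_measure_rpow_mul_lintegral_rpow hpq R hgc.aemeasurable
    _ ≤ μ R ^ (1 / q) * (∫⁻ σ, g (c • σ + v) ^ p ∂μ) ^ (1 / p) := by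
        gcongr _ * ?_ ^ _
        · exact one_div_nonneg.2 hpq.nonneg
        · exact setLIntegral_le_lintegral _ _
    _ = _ := by rw [lintegral_comp_smul_add μ hc (fun y => g y ^ p)]

theorem setLIntegral_comp_smul_add_smul_le {p q : ℝ} (hpq : p.HolderConjugate q) {a : ℝ}
    (ha_def : (finrank ℝ E : ℝ) * q / p = a) {g : E → ℝ≥0∞} (hg : Measurable g) {c : ℝ}
    (hc : 0 < c) (x θ : E) (R : Set E) :
    ∫⁻ σ in R, g (x + c • (σ + θ)) ∂μ ≤
      μ R ^ (1 / q) * (ENNReal.ofReal (c ^ (-a)) ^ (1 / q) * (∫⁻ y, g y ^ p ∂μ) ^ (1 / p)) := by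
  have harg : ∀ σ, x + c • (σ + θ) = c • σ + (x + c • θ) := fun σ => by rw [smul_add]; abel
  have hweight : ENNReal.ofReal (c ^ (-(finrank ℝ E : ℝ))) ^ (1 / p) =
      ENNReal.ofReal (c ^ (-a)) ^ (1 / q) := by
    rw [ENNReal.ofReal_rpow_of_pos (by positivity), ENNReal.ofReal_rpow_of_pos (by positivity),
      ← Real.rpow_mul hc.le, ← Real.rpow_mul hc.le, ← ha_def]
    congr 2
    field_simp [hpq.ne_zero, hpq.symm.ne_zero]
  simp_rw [harg]
  refine (setLIntegral_comp_smul_add_le μ hpq hg hc _ R).trans_eq ?_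
  rw [ENNReal.mul_rpow_of_nonneg _ _ (one_div_nonneg.2 hpq.nonneg), hweight]

theorem lintegral_cone_le {p q : ℝ} (hpq : p.HolderConjugate q) {a : ℝ}
    (ha_def : (finrank ℝ E : ℝ) * q / p = a) (ha : a < 1) {f : ℝ × E → ℝ≥0∞} (hf : Measurable f)
    (x θ : E) (R : Set E) {t u : ℝ} (htu : t ≤ u) :
    ∫⁻ σ in R, (∫⁻ τ in Set.Ioc t u, f (τ, x + (τ - t) • (σ + θ))) ∂μ ≤
      μ R ^ (1 / q) * ENNReal.ofReal ((u - t) ^ (1 - a) / (1 - a)) ^ (1 / q) *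
        (∫⁻ z, f z ^ p ∂(volume.prod μ)) ^ (1 / p) := by
  set G : ℝ → ℝ≥0∞ := fun τ => ∫⁻ y, f (τ, y) ^ p ∂μ
  set W : ℝ → ℝ≥0∞ := fun τ => ENNReal.ofReal ((τ - t) ^ (-a))
  have hfp : Measurable fun z => f z ^ p := hf.pow_const p
  have hG : Measurable G := hfp.lintegral_prod_right'
  have hW : Measurable W := by fun_prop
  have slice : ∀ τ ∈ Set.Ioc t u, ∫⁻ σ in R, f (τ, x + (τ - t) • (σ + θ)) ∂μ ≤
      μ R ^ (1 / q) * (W τ ^ (1 / q) * G τ ^ (1 / p)) := fun τ hτ =>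
    setLIntegral_comp_smul_add_smul_le μ hpq ha_def (hf.comp measurable_prodMk_left)
      (sub_pos.2 hτ.1) x θ R
  have holder := ENNReal.lintegral_mul_norm_pow_le (μ := volume.restrict (Set.Ioc t u))
    hW.aemeasurable hG.aemeasurable (one_div_nonneg.2 hpq.symm.nonneg)
    (one_div_nonneg.2 hpq.nonneg) (by rw [one_div, one_div, add_comm]; exact hpq.inv_add_inv_eq_one)
  have hGle : ∫⁻ τ in Set.Ioc t u, G τ ≤ ∫⁻ z, f z ^ p ∂(volume.prod μ) := by
    rw [lintegral_prod _ hfp.aemeasurable]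
    exact setLIntegral_le_lintegral _ _
  calc ∫⁻ σ in R, (∫⁻ τ in Set.Ioc t u, f (τ, x + (τ - t) • (σ + θ))) ∂μ
      = ∫⁻ τ in Set.Ioc t u, ∫⁻ σ in R, f (τ, x + (τ - t) • (σ + θ)) ∂μ :=
        lintegral_lintegral_swap (by fun_prop)
    _ ≤ ∫⁻ τ in Set.Ioc t u, μ R ^ (1 / q) * (W τ ^ (1 / q) * G τ ^ (1 / p)) :=
        setLIntegral_mono' measurableSet_Ioc slice
    _ = μ R ^ (1 / q) * ∫⁻ τ in Set.Ioc t u, W τ ^ (1 / q) * G τ ^ (1 / p) :=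
        lintegral_const_mul'' _ (by fun_prop)
    _ ≤ μ R ^ (1 / q) * ((∫⁻ τ in Set.Ioc t u, W τ) ^ (1 / q) *
          (∫⁻ τ in Set.Ioc t u, G τ) ^ (1 / p)) := by gcongr
    _ ≤ μ R ^ (1 / q) * (ENNReal.ofReal ((u - t) ^ (1 - a) / (1 - a)) ^ (1 / q) *
          (∫⁻ z, f z ^ p ∂(volume.prod μ)) ^ (1 / p)) := by
        rw [lintegral_Ioc_sub_rpow_neg ha htu]
        gcongr
        exact one_div_nonneg.2 hpq.nonneg
    _ = _ := (mul_assoc _ _ _).symm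

end AddHaar

theorem cone_integral_estimate_general {N : ℕ}
    (p : ℝ) (hp : (N : ℝ) + 1 < p) (q : ℝ) (hq : q = p / (p - 1)) :
    ∃ C : ℝ, 0 < C ∧
      ∀ f : ℝ × EuclideanSpace ℝ (Fin N) → ℝ≥0∞, Measurable f →
      ∀ x θ : EuclideanSpace ℝ (Fin N), ∀ t s : ℝ, 0 ≤ t → t < s →
      ∀ R : Set (EuclideanSpace ℝ (Fin N)), MeasurableSet R → volume R < ⊤ →
        (∫⁻ σ in R, ∫⁻ τ in Set.Ioc t ((t + s) / 2), f (τ, x + (τ - t) • (σ + θ)))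
          ≤ ENNReal.ofReal C * (volume R) ^ (1 / q) *
            (∫⁻ z, f z ^ p) ^ (1 / p) *
            ENNReal.ofReal ((s - t) ^ (1 - ((N : ℝ) + 1) / p)) := by
  have hp1 : 1 < p := by linarith [N.cast_nonneg (α := ℝ)]
  have hpq : p.HolderConjugate q := (Real.holderConjugate_iff_eq_conjExponent hp1).2 hq
  set a : ℝ := (N : ℝ) * q / p with ha_def
  have ha : a < 1 := by
    rw [ha_def, hq, mul_div_assoc, div_div_cancel_left' (by linarith), ← div_eq_mul_inv,
      div_lt_one (by linarith)]
    linarith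
  have he : 1 - ((N : ℝ) + 1) / p = (1 - a) * (1 / q) := by
    have := hpq.inv_add_inv_eq_one
    rw [ha_def]
    field_simp [hpq.ne_zero, hpq.symm.ne_zero] at this ⊢
    linarith
  have ha' : 0 < 1 - a := by linarith
  refine ⟨(2 ^ (1 - a) * (1 - a)) ^ (-(1 / q)), by positivity, ?_⟩
  intro f hf x θ t s _ hts R _ _
  have hscale : ENNReal.ofReal (((t + s) / 2 - t) ^ (1 - a) / (1 - a)) ^ (1 / q) =
      ENNReal.ofReal ((2 ^ (1 - a) * (1 - a)) ^ (-(1 / q))) *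
        ENNReal.ofReal ((s - t) ^ (1 - ((N : ℝ) + 1) / p)) := by
    have hD : 0 < s - t := sub_pos.2 hts
    rw [show (t + s) / 2 - t = (s - t) / 2 by ring,
      ENNReal.ofReal_rpow_of_nonneg (by positivity) (one_div_nonneg.2 hpq.symm.nonneg),
      ← ENNReal.ofReal_mul (by positivity), he, Real.div_rpow hD.le zero_le_two, div_div,
      Real.div_rpow (by positivity) (by positivity), Real.rpow_mul hD.le,
      Real.rpow_neg (by positivity), div_eq_inv_mul]
  calc _ ≤ _ := lintegral_cone_le volume hpq (by rw [finrank_euclideanSpace_fin]) ha hf x θ R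
        (by linarith)
    _ = _ := by rw [hscale, ← Measure.volume_eq_prod]; ring

/-- There is a constant `C`, depending only on `p` and `N`, such that for all
nonnegative measurable `f`, all `x, θ`, all `0 ≤ t < s`, and every measurable `R` of finite
measure: `∫_R ∫_t^{(t+s)/2} f(τ, x + (σ+θ)(τ−t)) dτ dσ ≤ C |R|^{1/q} ‖f‖_p (s−t)^{1−(N+1)/p}`. -/
theorem cone_integral_estimate {N : ℕ} (hN : 1 ≤ N)
    (p : ℝ) (hp : (N : ℝ) + 1 < p) (q : ℝ) (hq : q = p / (p - 1)) :
    ∃ C : ℝ, 0 < C ∧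
      ∀ f : ℝ × EuclideanSpace ℝ (Fin N) → ℝ≥0∞, Measurable f →
      ∀ x θ : EuclideanSpace ℝ (Fin N), ∀ t s : ℝ, 0 ≤ t → t < s →
      ∀ R : Set (EuclideanSpace ℝ (Fin N)), MeasurableSet R → volume R < ⊤ →
        (∫⁻ σ in R, ∫⁻ τ in Set.Ioc t ((t + s) / 2), f (τ, x + (τ - t) • (σ + θ)))
          ≤ ENNReal.ofReal C * (volume R) ^ (1 / q) *
            (∫⁻ z, f z ^ p) ^ (1 / p) *
            ENNReal.ofReal ((s - t) ^ (1 - ((N : ℝ) + 1) / p)) :=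
  cone_integral_estimate_general p hp q hq
end

section
/- Let ε ≥ 0 and let f_ε : [0,1]×ℝ → [0,1] be any continuous function such that f_ε(t,x) = 1 whenever 1−t ≤ x ≤ 1+t, and f_ε(t,x) = 0 whenever x ≤ 1−t−ε or x ≥ 1+t+ε. Define u_ε(t,x) := inf{ ∫_t^1 f_ε(s,y(s)) ds : y : [t,1] → ℝ Lipschitz with y(t) = x and |y'(s)| ≤ 1 for a.e. s }. Then for all (t,x) ∈ [0,1]×ℝ: u_ε(t,x) = 1−t if 1−t ≤ x ≤ 1+t, and u_ε(t,x) = 0 if x ≤ 1−t−ε or x ≥ 1+t+ε. In particular, as ε → 0 the functions u_ε converge pointwise on [0,1]×ℝ to the discontinuous function u(t,x) = (1−t)·χ_{{|x−1| ≤ t}}(t,x). -/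
open MeasureTheory Filter Topology

/-- The value `u(t,x) = inf { ∫_t^1 f(s,y(s)) ds : y 1-Lipschitz on [t,1], y(t) = x }`
(zero terminal cost). -/
noncomputable def val1D (f : ℝ × ℝ → ℝ) (t x : ℝ) : ℝ :=
  sInf {r : ℝ | ∃ y : ℝ → ℝ, LipschitzOnWith 1 y (Set.Icc t 1) ∧ y t = x ∧
    r = ∫ s in t..1, f (s, y s)}

lemma val1D_inside (f : ℝ × ℝ → ℝ)
    (hcone : ∀ t x : ℝ, t ∈ Set.Icc (0:ℝ) 1 → 1 - t ≤ x → x ≤ 1 + t → f (t, x) = 1)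
    {t x : ℝ} (ht : t ∈ Set.Icc (0:ℝ) 1) (h1 : 1 - t ≤ x) (h2 : x ≤ 1 + t) :
    val1D f t x = 1 - t := by
  obtain ⟨ht0, ht1⟩ := ht
  have key : ∀ y : ℝ → ℝ, LipschitzOnWith 1 y (Set.Icc t 1) → y t = x →
      (∫ s in t..1, f (s, y s)) = 1 - t := by
    intro y hy hyt
    have heq : Set.EqOn (fun s => f (s, y s)) (fun _ => (1:ℝ)) (Set.uIcc t 1) := by
      intro s hs
      rw [Set.uIcc_of_le ht1] at hs
      have hd : |y s - x| ≤ s - t := by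
        have := hy.dist_le_mul s hs t (Set.left_mem_Icc.2 ht1)
        rw [hyt] at this
        simpa [Real.dist_eq, abs_of_nonneg (sub_nonneg.2 hs.1)] using this
      obtain ⟨hdl, hdr⟩ := abs_le.1 hd
      exact hcone s (y s) ⟨le_trans ht0 hs.1, hs.2⟩ (by linarith) (by linarith)
    rw [intervalIntegral.integral_congr heq]
    simp
  have hconst : LipschitzOnWith 1 (fun _ => x) (Set.Icc t 1) := by
    apply LipschitzWith.lipschitzOnWith
    apply LipschitzWith.of_dist_le_mul
    intro a b
    simp [dist_nonneg]
  have hmem : (1 - t) ∈ {r : ℝ | ∃ y : ℝ → ℝ, LipschitzOnWith 1 y (Set.Icc t 1) ∧ y t = x ∧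
      r = ∫ s in t..1, f (s, y s)} :=
    ⟨fun _ => x, hconst, rfl, (key _ hconst rfl).symm⟩
  unfold val1D
  apply le_antisymm
  · apply csInf_le _ hmem
    refine ⟨1 - t, ?_⟩
    rintro r ⟨y, hy, hyt, rfl⟩
    exact (key y hy hyt).ge
  · apply le_csInf ⟨1 - t, hmem⟩
    rintro r ⟨y, hy, hyt, rfl⟩
    exact (key y hy hyt).ge

lemma val1D_outside (f : ℝ × ℝ → ℝ) {ε : ℝ} (hε : 0 ≤ ε)
    (hf01 : ∀ q, f q ∈ Set.Icc (0:ℝ) 1)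
    (hout : ∀ t x : ℝ, t ∈ Set.Icc (0:ℝ) 1 → (x ≤ 1 - t - ε ∨ 1 + t + ε ≤ x) → f (t, x) = 0)
    {t x : ℝ} (ht : t ∈ Set.Icc (0:ℝ) 1) (hx : x ≤ 1 - t - ε ∨ 1 + t + ε ≤ x) :
    val1D f t x = 0 := by
  obtain ⟨ht0, ht1⟩ := ht
  set y : ℝ → ℝ := fun s => if x ≤ 1 - t - ε then x - (s - t) else x + (s - t) with hy_def
  have hylip : LipschitzOnWith 1 y (Set.Icc t 1) := by
    apply LipschitzWith.lipschitzOnWith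
    apply LipschitzWith.of_dist_le_mul
    intro a b
    by_cases h : x ≤ 1 - t - ε <;>
      simp only [y, h, if_true, if_false, Real.dist_eq, NNReal.coe_one, one_mul] <;>
      apply le_of_eq
    · rw [show x - (a - t) - (x - (b - t)) = -(a - b) by ring, abs_neg]
    · congr 1; ring
  have hyt : y t = x := by simp [y]
  have hzero : (∫ s in t..1, f (s, y s)) = 0 := by
    have heq : Set.EqOn (fun s => f (s, y s)) (fun _ => (0:ℝ)) (Set.uIcc t 1) := by
      intro s hs
      rw [Set.uIcc_of_le ht1] at hs
      by_cases hc : x ≤ 1 - t - ε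
      · have hys : y s = x - (s - t) := by simp [y, hc]
        exact hout s (y s) ⟨le_trans ht0 hs.1, hs.2⟩ (Or.inl (by rw [hys]; linarith [hs.1]))
      · have h : 1 + t + ε ≤ x := hx.resolve_left hc
        have hys : y s = x + (s - t) := by simp [y, hc]
        exact hout s (y s) ⟨le_trans ht0 hs.1, hs.2⟩ (Or.inr (by rw [hys]; linarith [hs.1]))
    rw [intervalIntegral.integral_congr heq]
    simp
  have hmem : (0:ℝ) ∈ {r : ℝ | ∃ z : ℝ → ℝ, LipschitzOnWith 1 z (Set.Icc t 1) ∧ z t = x ∧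
      r = ∫ s in t..1, f (s, z s)} := ⟨y, hylip, hyt, hzero.symm⟩
  have hlb : ∀ r ∈ {r : ℝ | ∃ z : ℝ → ℝ, LipschitzOnWith 1 z (Set.Icc t 1) ∧ z t = x ∧
      r = ∫ s in t..1, f (s, z s)}, (0:ℝ) ≤ r := by
    rintro r ⟨z, hz, hzt, rfl⟩
    exact intervalIntegral.integral_nonneg ht1 fun u _ => (hf01 (u, z u)).1
  unfold val1D
  exact le_antisymm (csInf_le ⟨0, hlb⟩ hmem) (le_csInf ⟨0, hmem⟩ hlb)

/-- The explicit one-dimensional example: for the approximate obstacles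
`f_ε`, the value function equals `1−t` inside the cone `1−t ≤ x ≤ 1+t` and `0` outside the
`ε`-enlarged cone; in particular as `ε → 0⁺` the value functions converge pointwise to the
discontinuous function `(1−t)·χ_{|x−1| ≤ t}`. -/
theorem loss_of_continuity_example :
    (∀ ε : ℝ, 0 ≤ ε → ∀ f : ℝ × ℝ → ℝ, Continuous f →
      (∀ q, f q ∈ Set.Icc (0:ℝ) 1) →
      (∀ t x : ℝ, t ∈ Set.Icc (0:ℝ) 1 → 1 - t ≤ x → x ≤ 1 + t → f (t, x) = 1) →
      (∀ t x : ℝ, t ∈ Set.Icc (0:ℝ) 1 → (x ≤ 1 - t - ε ∨ 1 + t + ε ≤ x) → f (t, x) = 0) →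
      ∀ t ∈ Set.Icc (0:ℝ) 1, ∀ x : ℝ,
        ((1 - t ≤ x ∧ x ≤ 1 + t) → val1D f t x = 1 - t) ∧
        ((x ≤ 1 - t - ε ∨ 1 + t + ε ≤ x) → val1D f t x = 0)) ∧
    (∀ F : ℝ → ℝ × ℝ → ℝ,
      (∀ ε : ℝ, 0 < ε → Continuous (F ε) ∧
        (∀ q, F ε q ∈ Set.Icc (0:ℝ) 1) ∧
        (∀ t x : ℝ, t ∈ Set.Icc (0:ℝ) 1 → 1 - t ≤ x → x ≤ 1 + t → F ε (t, x) = 1) ∧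
        (∀ t x : ℝ, t ∈ Set.Icc (0:ℝ) 1 → (x ≤ 1 - t - ε ∨ 1 + t + ε ≤ x) → F ε (t, x) = 0)) →
      ∀ t ∈ Set.Icc (0:ℝ) 1, ∀ x : ℝ,
        Tendsto (fun ε => val1D (F ε) t x) (𝓝[>] 0)
          (𝓝 (if |x - 1| ≤ t then 1 - t else 0))) := by
  constructor
  · intro ε hε f _hf hf01 hcone hout t ht x
    exact ⟨fun ⟨h1, h2⟩ => val1D_inside f hcone ht h1 h2,
      fun hx => val1D_outside f hε hf01 hout ht hx⟩
  · intro F hF t ht x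
    by_cases hin : |x - 1| ≤ t
    · rw [if_pos hin]
      obtain ⟨hl, hr⟩ := abs_le.1 hin
      apply Tendsto.congr' _ tendsto_const_nhds
      filter_upwards [self_mem_nhdsWithin] with ε (hε : ε ∈ Set.Ioi (0:ℝ))
      exact (val1D_inside (F ε) (hF ε hε).2.2.1 ht (by linarith) (by linarith)).symm
    · rw [if_neg hin]
      push_neg at hin
      apply Tendsto.congr' _ tendsto_const_nhds
      have hmem : Set.Ioo (0:ℝ) (|x - 1| - t) ∈ 𝓝[>] (0:ℝ) :=
        Ioo_mem_nhdsGT_of_mem ⟨le_refl 0, by linarith⟩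
      filter_upwards [hmem] with ε hε
      have h' : t + ε < |x - 1| := by
        have := hε.2; linarith
      rcases lt_abs.1 h' with h | h
      · exact (val1D_outside (F ε) hε.1.le (hF ε hε.1).2.1 (hF ε hε.1).2.2.2 ht
          (Or.inr (by linarith))).symm
      · exact (val1D_outside (F ε) hε.1.le (hF ε hε.1).2.1 (hF ε hε.1).2.2.2 ht
          (Or.inl (by linarith))).symm
end
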